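/- arXiv:1207.5360 — 6 statements merged into one kernel-verified Lean document; each statement's English description precedes it below -/
import Mathlib

section
/- Let M be a (2n+2m)×(2n+2m) real matrix of the block form M = [[Ψ, A, 0], [0, I_m, 0], [B, C, I_m]], where Ψ is a 2n×2n block, A is 2n×m, B is m×2n, C is m×m, and I_m denotes the m×m identity. Then M is symplectic with respect to the standard symplectic structure J̃₀ = [[J₀,0,0],[0,0,-I],[0,I,0]] if and only if Ψ is symplectic (Ψᵀ J₀ Ψ = J₀) and there exist a 2n×m matrix X and a symmetric m×m matrix E with A = ΨX, B = XᵀJ₀, and C = E + (1/2) Xᵀ J₀ X. -/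
/-!
Multiplying out the blocks, `M` is symplectic iff `ΨᵀJ₀Ψ = J₀`, `AᵀJ₀Ψ = B` (together with its
transpose `ΨᵀJ₀A + Bᵀ = 0`) and `C - Cᵀ = AᵀJ₀A`. A symplectic `Ψ` is invertible, so `A = ΨX` with
`X = Ψ⁻¹A`; then `AᵀJ₀Ψ = XᵀJ₀` and `AᵀJ₀A = XᵀJ₀X`. The last condition says that the
antisymmetric part of `C` is `½ XᵀJ₀X`, i.e. that `E = C - ½ XᵀJ₀X` is symmetric.
-/

open Matrix

/-- Index type for `ℝ^{2n}` viewed as `ℝ^n ⊕ ℝ^n`. -/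
abbrev V (n : ℕ) := Fin n ⊕ Fin n

/-- The standard complex structure `J₀ = [[0,-I],[I,0]]` on `ℝ^{2n}`. -/
noncomputable def J0 (n : ℕ) : Matrix (V n) (V n) ℝ :=
  Matrix.fromBlocks 0 (-1) 1 0

/-- The standard complex structure `J̃₀` on `ℝ^{2n} ⊕ ℝ^m ⊕ ℝ^m`. -/
noncomputable def Jt0 (n m : ℕ) : Matrix (V n ⊕ V m) (V n ⊕ V m) ℝ :=
  Matrix.fromBlocks (J0 n) 0 0 (J0 m)

/-- `M` is symplectic with respect to the structure `J`. -/
def IsSympl {ι : Type*} [Fintype ι] (J M : Matrix ι ι ℝ) : Prop :=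
  Mᵀ * J * M = J

section

variable {ι κ α β : Type*} [Fintype ι]

lemma IsSympl.transpose_mul_mul_mul {J Ψ : Matrix ι ι ℝ} (hΨ : IsSympl J Ψ) (X : Matrix ι α ℝ)
    (Y : Matrix ι β ℝ) : (Ψ * X)ᵀ * J * (Ψ * Y) = Xᵀ * J * Y :=
  calc (Ψ * X)ᵀ * J * (Ψ * Y) = Xᵀ * (Ψᵀ * J * Ψ) * Y := by
        simp only [transpose_mul, Matrix.mul_assoc]
    _ = Xᵀ * J * Y := congrArg (fun P => Xᵀ * P * Y) hΨ

lemma transpose_transpose_mul_mul_of_transpose_eq_neg {J : Matrix ι ι ℝ} (hJ : Jᵀ = -J)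
    (X : Matrix ι α ℝ) : (Xᵀ * J * X)ᵀ = -(Xᵀ * J * X) := by
  simp [transpose_mul, hJ, Matrix.mul_assoc]

lemma add_transpose_eq_iff_exists_symm {C K : Matrix κ κ ℝ} (hK : Kᵀ = -K) :
    K + Cᵀ = C ↔ ∃ E : Matrix κ κ ℝ, Eᵀ = E ∧ C = E + (1 / 2 : ℝ) • K := by
  constructor
  · intro h
    refine ⟨C - (1 / 2 : ℝ) • K, ?_, by abel⟩
    rw [transpose_sub, transpose_smul, hK, eq_sub_of_add_eq' h]
    module
  · rintro ⟨E, hE, rfl⟩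
    rw [transpose_add, transpose_smul, hE, hK]
    module

variable [Fintype κ] [DecidableEq κ]

lemma transpose_mul_mul_fromBlocks (J Ψ : Matrix ι ι ℝ) (A : Matrix ι κ ℝ) (B : Matrix κ ι ℝ)
    (C : Matrix κ κ ℝ) :
    (fromBlocks Ψ (fromCols A 0) (fromRows 0 B) (fromBlocks 1 0 C 1))ᵀ *
        fromBlocks J 0 0 (fromBlocks 0 (-1) (1 : Matrix κ κ ℝ) 0) *
        fromBlocks Ψ (fromCols A 0) (fromRows 0 B) (fromBlocks 1 0 C 1) =
      fromBlocks (Ψᵀ * J * Ψ) (fromCols (Ψᵀ * J * A + Bᵀ) 0) (fromRows (Aᵀ * J * Ψ - B) 0)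
        (fromBlocks (Aᵀ * J * A + (Cᵀ - C)) (-1) 1 0) := by
  simp only [fromBlocks_transpose, transpose_fromRows, transpose_zero, transpose_fromCols,
    transpose_one, fromBlocks_multiply, Matrix.mul_zero, add_zero, fromCols_mul_fromBlocks,
    Matrix.mul_one, zero_add, Matrix.mul_neg, neg_zero, fromRows_mul, Matrix.zero_mul, mul_zero,
    mul_one, mul_neg, fromCols_mul_fromRows, mul_fromCols, fromBlocks_mul_fromRows, Matrix.neg_mul,
    Matrix.one_mul, neg_mul, one_mul, zero_mul, fromBlocks_inj, true_and]
  refine ⟨?_, ?_, ?_⟩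
  · ext i (j | j) <;> simp
  · ext (i | i) j <;> simp [sub_eq_add_neg]
  · ext (i | i) (j | j) <;> simp [sub_eq_add_neg]

lemma isSympl_fromBlocks_iff (J Ψ : Matrix ι ι ℝ) (A : Matrix ι κ ℝ) (B : Matrix κ ι ℝ)
    (C : Matrix κ κ ℝ) :
    IsSympl (fromBlocks J 0 0 (fromBlocks 0 (-1) (1 : Matrix κ κ ℝ) 0))
        (fromBlocks Ψ (fromCols A 0) (fromRows 0 B) (fromBlocks 1 0 C 1)) ↔
      IsSympl J Ψ ∧ Ψᵀ * J * A + Bᵀ = 0 ∧ Aᵀ * J * Ψ = B ∧ Aᵀ * J * A + Cᵀ = C := by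
  rw [IsSympl, transpose_mul_mul_fromBlocks, fromBlocks_inj, ← fromCols_zero, ← fromRows_zero,
    fromCols_ext_iff, fromRows_ext_iff, fromBlocks_inj]
  simp [IsSympl, add_sub, sub_eq_iff_eq_add]

end

/-- A block matrix `[[Ψ, A, 0],[0, I, 0],[B, C, I]]` is symplectic iff `Ψ` is
symplectic and `A = ΨX`, `B = XᵀJ₀`, `C = E + ½ XᵀJ₀X` for some `X` and some
symmetric `E`. -/
theorem stmt0 {n m : ℕ} (Ψ : Matrix (V n) (V n) ℝ) (A : Matrix (V n) (Fin m) ℝ)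
    (B : Matrix (Fin m) (V n) ℝ) (C : Matrix (Fin m) (Fin m) ℝ) :
    IsSympl (Jt0 n m)
      (Matrix.fromBlocks Ψ (Matrix.fromCols A 0)
        (Matrix.fromRows 0 B) (Matrix.fromBlocks 1 0 C 1)) ↔
      (IsSympl (J0 n) Ψ ∧ ∃ (X : Matrix (V n) (Fin m) ℝ) (E : Matrix (Fin m) (Fin m) ℝ),
        Eᵀ = E ∧ A = Ψ * X ∧ B = Xᵀ * J0 n ∧
          C = E + (1 / 2 : ℝ) • (Xᵀ * J0 n * X)) := by
  -- `J0 n` is definitionally Mathlib's `Matrix.J (Fin n) ℝ`.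
  have hJ : (J0 n)ᵀ = -J0 n := J_transpose (Fin n) ℝ
  have hXJX (X : Matrix (V n) (Fin m) ℝ) := transpose_transpose_mul_mul_of_transpose_eq_neg hJ X
  refine (isSympl_fromBlocks_iff (J0 n) Ψ A B C).trans ⟨?_, ?_⟩
  · rintro ⟨hΨ, -, hB, hC⟩
    have hdet : IsUnit Ψ.det := SymplecticGroup.symplectic_det (SymplecticGroup.mem_iff'.mpr hΨ)
    obtain ⟨X, rfl⟩ : ∃ X, A = Ψ * X := ⟨Ψ⁻¹ * A, (mul_nonsing_inv_cancel_left Ψ A hdet).symm⟩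
    rw [hΨ.transpose_mul_mul_mul X X, add_transpose_eq_iff_exists_symm (hXJX X)] at hC
    obtain ⟨E, hE, rfl⟩ := hC
    refine ⟨hΨ, X, E, hE, rfl, ?_, rfl⟩
    rw [← hB]
    simpa using hΨ.transpose_mul_mul_mul X (1 : Matrix (V n) (V n) ℝ)
  · rintro ⟨hΨ, X, E, hE, rfl, rfl, rfl⟩
    refine ⟨hΨ, ?_, by simpa using hΨ.transpose_mul_mul_mul X (1 : Matrix (V n) (V n) ℝ), ?_⟩
    · simpa [hJ, ← sub_eq_add_neg, sub_eq_zero] using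
        hΨ.transpose_mul_mul_mul (1 : Matrix (V n) (V n) ℝ) X
    · rw [hΨ.transpose_mul_mul_mul X X, add_transpose_eq_iff_exists_symm (hXJX X)]
      exact ⟨E, hE, rfl⟩
end

section
/- For Ψ₁, Ψ₂ ∈ Sp(2n), X₁, X₂ ∈ Mat_{2n,m}(R), and symmetric E₁, E₂ ∈ Mat_m(R), the product M(Ψ₁,X₁,E₁)·M(Ψ₂,X₂,E₂) equals M(Ψ₁Ψ₂, X₂ + Ψ₂⁻¹X₁, E₁ + E₂ + Sym(X₁ᵀ J₀ Ψ₂ X₂)), where Sym(P) = (P + Pᵀ)/2. -/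
open Matrix

/-- `Ψ` is symplectic: `Ψᵀ J₀ Ψ = J₀`. -/
def IsSymplectic {n : ℕ} (Ψ : Matrix (V n) (V n) ℝ) : Prop :=
  Ψᵀ * J0 n * Ψ = J0 n

/-- The block matrix `M(Ψ,X,E) = [[Ψ, ΨX, 0],[0, I, 0],[XᵀJ₀, E + ½XᵀJ₀X, I]]`. -/
noncomputable def Mblk {n m : ℕ} (Ψ : Matrix (V n) (V n) ℝ) (X : Matrix (V n) (Fin m) ℝ)
    (E : Matrix (Fin m) (Fin m) ℝ) : Matrix (V n ⊕ V m) (V n ⊕ V m) ℝ :=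
  Matrix.fromBlocks Ψ (Matrix.fromCols (Ψ * X) 0)
    (Matrix.fromRows 0 (Xᵀ * J0 n))
    (Matrix.fromBlocks 1 0 (E + (1 / 2 : ℝ) • (Xᵀ * J0 n * X)) 1)

/-- The symmetric part `symPart(P) = (P + Pᵀ)/2` of a square matrix. -/
noncomputable def symPart {m : ℕ} (P : Matrix (Fin m) (Fin m) ℝ) : Matrix (Fin m) (Fin m) ℝ :=
  (1 / 2 : ℝ) • (P + Pᵀ)

/-! Matrices of the shape `[[A, B, 0], [0, 1, 0], [C, F, 1]]` multiply blockwise as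
`(A₁A₂, A₁B₂ + B₁, C₁A₂ + C₂, C₁B₂ + F₁ + F₂)`, and `M(Ψ, X, E)` has this shape. For symplectic
`Ψ₂`, `(Ψ₂⁻¹)ᵀJ₀ = J₀Ψ₂` and `Ψ₂⁻¹` is again symplectic, so with `Y = X₂ + Ψ₂⁻¹X₁` and
`P = X₁ᵀJ₀Ψ₂X₂` one gets `YᵀJ₀Y = X₂ᵀJ₀X₂ + X₁ᵀJ₀X₁ + P - Pᵀ`, which says exactly that the cross
term `C₁B₂ = P` of the product equals `Sym(P) + ½YᵀJ₀Y - ½X₁ᵀJ₀X₁ - ½X₂ᵀJ₀X₂`. -/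

namespace Matrix

section ShearBlocks

variable {α β γ R : Type*} [Fintype α] [Fintype β] [Fintype γ] [DecidableEq β] [DecidableEq γ]
  [Semiring R]

def shearBlocks (A : Matrix α α R) (B : Matrix α β R) (C : Matrix γ α R) (F : Matrix γ β R) :
    Matrix (α ⊕ β ⊕ γ) (α ⊕ β ⊕ γ) R :=
  fromBlocks A (fromCols B 0) (fromRows 0 C) (fromBlocks 1 0 F 1)

theorem shearBlocks_mul (A₁ A₂ : Matrix α α R) (B₁ B₂ : Matrix α β R) (C₁ C₂ : Matrix γ α R)
    (F₁ F₂ : Matrix γ β R) :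
    shearBlocks A₁ B₁ C₁ F₁ * shearBlocks A₂ B₂ C₂ F₂ =
      shearBlocks (A₁ * A₂) (A₁ * B₂ + B₁) (C₁ * A₂ + C₂) (C₁ * B₂ + F₁ + F₂) := by
  ext (i | i | i) (j | j | j) <;>
    simp [shearBlocks, mul_apply, Fintype.sum_sum_type, one_apply, add_assoc]

end ShearBlocks

end Matrix

namespace SymplecticGroup

variable {l k R : Type*} [Fintype l] [DecidableEq l] [CommRing R]
  {A : Matrix (l ⊕ l) (l ⊕ l) R}

theorem inv_mem (hA : A ∈ symplecticGroup l R) : A⁻¹ ∈ symplecticGroup l R := by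
  simpa only [coe_inv'] using (⟨A, hA⟩⁻¹ : symplecticGroup l R).prop

theorem J_mul_inv (hA : A ∈ symplecticGroup l R) : J l R * A⁻¹ = Aᵀ * J l R := by
  conv_lhs => rw [← mem_iff'.1 hA]
  rw [Matrix.mul_assoc, mul_nonsing_inv _ (symplectic_det hA), Matrix.mul_one]

theorem transpose_inv_mul_J (hA : A ∈ symplecticGroup l R) : (A⁻¹)ᵀ * J l R = J l R * A := by
  conv_rhs => rw [← mem_iff'.1 (inv_mem hA)]
  rw [Matrix.mul_assoc _ A⁻¹, nonsing_inv_mul _ (symplectic_det hA), Matrix.mul_one]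

theorem transpose_mul_J_mul_add_inv_mul (hA : A ∈ symplecticGroup l R)
    (X₁ X₂ : Matrix (l ⊕ l) k R) :
    (X₂ + A⁻¹ * X₁)ᵀ * J l R * (X₂ + A⁻¹ * X₁) =
      X₂ᵀ * J l R * X₂ + X₁ᵀ * J l R * X₁ +
        (X₁ᵀ * J l R * A * X₂ - (X₁ᵀ * J l R * A * X₂)ᵀ) := by
  calc (X₂ + A⁻¹ * X₁)ᵀ * J l R * (X₂ + A⁻¹ * X₁)
      = X₂ᵀ * J l R * X₂ + X₂ᵀ * (J l R * A⁻¹) * X₁ + X₁ᵀ * ((A⁻¹)ᵀ * J l R) * X₂ +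
          X₁ᵀ * ((A⁻¹)ᵀ * J l R * A⁻¹) * X₁ := by
        simp only [transpose_add, transpose_mul, Matrix.add_mul, Matrix.mul_add, Matrix.mul_assoc]
        abel
    _ = X₂ᵀ * (Aᵀ * J l R) * X₁ + X₁ᵀ * (J l R * A) * X₂ + X₂ᵀ * J l R * X₂ +
          X₁ᵀ * J l R * X₁ := by
        rw [mem_iff'.1 (inv_mem hA), J_mul_inv hA, transpose_inv_mul_J hA]
        abel
    _ = _ := by
        simp only [transpose_mul, transpose_transpose, J_transpose, Matrix.mul_neg,
          Matrix.neg_mul, Matrix.mul_assoc]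
        abel

end SymplecticGroup

theorem J0_eq_J (n : ℕ) : J0 n = J (Fin n) ℝ :=
  rfl

theorem isSymplectic_iff_mem_symplecticGroup {n : ℕ} {Ψ : Matrix (V n) (V n) ℝ} :
    IsSymplectic Ψ ↔ Ψ ∈ symplecticGroup (Fin n) ℝ :=
  SymplecticGroup.mem_iff'.symm

theorem Mblk_eq_shearBlocks {n m : ℕ} (Ψ : Matrix (V n) (V n) ℝ) (X : Matrix (V n) (Fin m) ℝ)
    (E : Matrix (Fin m) (Fin m) ℝ) :
    Mblk Ψ X E = shearBlocks Ψ (Ψ * X) (Xᵀ * J0 n) (E + (1 / 2 : ℝ) • (Xᵀ * J0 n * X)) :=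
  rfl

theorem stmt1_general {n m : ℕ} (Ψ₁ Ψ₂ : Matrix (V n) (V n) ℝ)
    (X₁ X₂ : Matrix (V n) (Fin m) ℝ) (E₁ E₂ : Matrix (Fin m) (Fin m) ℝ)
    (hΨ₂ : IsSymplectic Ψ₂) :
    Mblk Ψ₁ X₁ E₁ * Mblk Ψ₂ X₂ E₂ =
      Mblk (Ψ₁ * Ψ₂) (X₂ + Ψ₂⁻¹ * X₁) (E₁ + E₂ + symPart (X₁ᵀ * J0 n * Ψ₂ * X₂)) := by
  have hΨ := isSymplectic_iff_mem_symplecticGroup.1 hΨ₂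
  simp only [Mblk_eq_shearBlocks, shearBlocks_mul, J0_eq_J]
  congr 1
  · simp only [Matrix.mul_add, Matrix.mul_assoc,
      mul_nonsing_inv_cancel_left _ _ (SymplecticGroup.symplectic_det hΨ)]
  · rw [transpose_add, transpose_mul, Matrix.add_mul, Matrix.mul_assoc X₁ᵀ (Ψ₂⁻¹)ᵀ,
      SymplecticGroup.transpose_inv_mul_J hΨ, Matrix.mul_assoc, add_comm]
  · rw [SymplecticGroup.transpose_mul_J_mul_add_inv_mul hΨ, symPart]
    simp only [Matrix.mul_assoc]
    module

/-- Product formula: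
`M(Ψ₁,X₁,E₁)·M(Ψ₂,X₂,E₂) = M(Ψ₁Ψ₂, X₂ + Ψ₂⁻¹X₁, E₁ + E₂ + Sym(X₁ᵀJ₀Ψ₂X₂))`. -/
theorem stmt1 {n m : ℕ} (Ψ₁ Ψ₂ : Matrix (V n) (V n) ℝ)
    (X₁ X₂ : Matrix (V n) (Fin m) ℝ) (E₁ E₂ : Matrix (Fin m) (Fin m) ℝ)
    (hΨ₁ : IsSymplectic Ψ₁) (hΨ₂ : IsSymplectic Ψ₂)
    (hE₁ : E₁ᵀ = E₁) (hE₂ : E₂ᵀ = E₂) :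
    Mblk Ψ₁ X₁ E₁ * Mblk Ψ₂ X₂ E₂ =
      Mblk (Ψ₁ * Ψ₂) (X₂ + Ψ₂⁻¹ * X₁) (E₁ + E₂ + symPart (X₁ᵀ * J0 n * Ψ₂ * X₂)) :=
  stmt1_general Ψ₁ Ψ₂ X₁ X₂ E₁ E₂ hΨ₂
end

section
/- For any M = M(Ψ,X,E) ∈ 𝒮_{n,m} with Ψ ∈ Sp(2n), X ∈ Mat_{2n,m}(R), E symmetric, the kernel of M − I contains {0} ⊕ {0} ⊕ R^m, and dim ker(M − I) > m if and only if the (2n+m)×(2n+m) matrix [[Ψ − I, ΨX],[XᵀJ₀, E + (1/2)XᵀJ₀X]] is singular. -/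
open Matrix

/-!
Write a vector of `ℝ^{2n} ⊕ ℝ^m ⊕ ℝ^m` as `(x, y, z)`. The middle row of `M(Ψ,X,E)` is the
identity and its last column is `(0, 0, I)`, so `M v = v` says exactly that the reduced matrix
`[[Ψ − I, ΨX], [XᵀJ₀, E + ½XᵀJ₀X]]` kills `(x, y)`, with `z` free. Hence `ker (M − I)` is the
preimage of the kernel of the reduced matrix under the surjective projection
`(x, y, z) ↦ (x, y)`, whose kernel is the `m`-dimensional `z`-space; its dimension is
`m + dim ker`, which exceeds `m` exactly when the reduced matrix is singular.
-/
theorem LinearMap.finrank_ker_comp_of_surjective {K U V W : Type*} [DivisionRing K]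
    [AddCommGroup U] [Module K U] [AddCommGroup V] [Module K V] [AddCommGroup W] [Module K W]
    [FiniteDimensional K U] (f : U →ₗ[K] V) (g : V →ₗ[K] W) (hf : Function.Surjective f) :
    Module.finrank K (ker (g ∘ₗ f)) = Module.finrank K (ker g) + Module.finrank K (ker f) := by
  have : FiniteDimensional K V := Module.Finite.of_surjective f hf
  have hrange : range (g ∘ₗ f) = range g := range_comp_of_range_eq_top g (range_eq_top.2 hf)
  have hgf := finrank_range_add_finrank_ker (g ∘ₗ f)
  have hg := finrank_range_add_finrank_ker g
  have hf' := finrank_range_add_finrank_ker f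
  rw [hrange] at hgf
  rw [range_eq_top.2 hf, finrank_top] at hf'
  omega

theorem LinearMap.finrank_ker_funLeft_of_injective (K : Type*) [Field K] {ι κ : Type*}
    [Fintype ι] [Fintype κ] {e : ι → κ} (he : Function.Injective e) :
    Module.finrank K (ker (funLeft K K e)) = Fintype.card κ - Fintype.card ι := by
  have h := finrank_range_add_finrank_ker (funLeft K K e)
  rw [range_eq_top.2 (funLeft_surjective_of_injective K K e he), finrank_top,
    Module.finrank_fintype_fun_eq_card, Module.finrank_fintype_fun_eq_card] at h
  omega

theorem Matrix.finrank_ker_mulVecLin_pos_iff {K ι : Type*} [Field K] [Fintype ι] [DecidableEq ι]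
    (A : Matrix ι ι K) : 0 < Module.finrank K (LinearMap.ker A.mulVecLin) ↔ A.det = 0 := by
  rw [Module.finrank_pos_iff_exists_ne_zero, ← exists_mulVec_eq_zero_iff]
  simp [and_comm]

-- `M(Ψ,X,E) − I` with its zero middle row and zero last column deleted.
noncomputable def Mred {n m : ℕ} (Ψ : Matrix (V n) (V n) ℝ) (X : Matrix (V n) (Fin m) ℝ)
    (E : Matrix (Fin m) (Fin m) ℝ) : Matrix (V n ⊕ Fin m) (V n ⊕ Fin m) ℝ :=
  Matrix.fromBlocks (Ψ - 1) (Ψ * X) (Xᵀ * J0 n) (E + (1 / 2 : ℝ) • (Xᵀ * J0 n * X))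

section Mblk

variable {n m : ℕ} (Ψ : Matrix (V n) (V n) ℝ) (X : Matrix (V n) (Fin m) ℝ)
  (E : Matrix (Fin m) (Fin m) ℝ)

theorem Mblk_mulVec (x : V n → ℝ) (y z : Fin m → ℝ) :
    Mblk Ψ X E *ᵥ Sum.elim x (Sum.elim y z) =
      Sum.elim (Ψ *ᵥ x + (Ψ * X) *ᵥ y)
        (Sum.elim y ((Xᵀ * J0 n) *ᵥ x + (E + (1 / 2 : ℝ) • (Xᵀ * J0 n * X)) *ᵥ y + z)) := by
  ext (i | j | j) <;> simp [Mblk, fromBlocks_mulVec, fromRows_mulVec, add_assoc]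

theorem Mblk_mulVec_eq_self_iff (x : V n → ℝ) (y z : Fin m → ℝ) :
    Mblk Ψ X E *ᵥ Sum.elim x (Sum.elim y z) = Sum.elim x (Sum.elim y z) ↔
      Mred Ψ X E *ᵥ Sum.elim x y = 0 := by
  rw [Mblk_mulVec, Mred, fromBlocks_mulVec, ← Sum.elim_zero_zero, Sum.elim_eq_iff,
    Sum.elim_eq_iff, Sum.elim_eq_iff, add_eq_right]
  simp [sub_mulVec, sub_add_eq_add_sub, sub_eq_zero]

theorem ker_Mblk_sub_id :
    LinearMap.ker ((Mblk Ψ X E).mulVecLin - LinearMap.id) =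
      LinearMap.ker ((Mred Ψ X E).mulVecLin ∘ₗ LinearMap.funLeft ℝ ℝ (Sum.map id Sum.inl)) := by
  ext v
  obtain ⟨x, y, z, rfl⟩ : ∃ x y z, v = Sum.elim x (Sum.elim y z) :=
    ⟨v ∘ Sum.inl, v ∘ Sum.inr ∘ Sum.inl, v ∘ Sum.inr ∘ Sum.inr, by ext (i | j | j) <;> rfl⟩
  simp [sub_eq_zero, Mblk_mulVec_eq_self_iff, LinearMap.funLeft, Sum.elim_comp_map]

end Mblk

theorem stmt7_general {n m : ℕ} (Ψ : Matrix (V n) (V n) ℝ) (X : Matrix (V n) (Fin m) ℝ)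
    (E : Matrix (Fin m) (Fin m) ℝ) :
    (∀ v : Fin m → ℝ,
      (Mblk Ψ X E).mulVec (Sum.elim (0 : V n → ℝ) (Sum.elim (0 : Fin m → ℝ) v)) =
        Sum.elim (0 : V n → ℝ) (Sum.elim (0 : Fin m → ℝ) v)) ∧
    (m < Module.finrank ℝ
        (LinearMap.ker ((Mblk Ψ X E).mulVecLin - LinearMap.id)) ↔
      (Matrix.fromBlocks (Ψ - 1) (Ψ * X) (Xᵀ * J0 n)
        (E + (1 / 2 : ℝ) • (Xᵀ * J0 n * X))).det = 0) := by
  have hinj : Function.Injective (Sum.map id Sum.inl : V n ⊕ Fin m → V n ⊕ V m) :=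
    Sum.map_injective.2 ⟨Function.injective_id, Sum.inl_injective⟩
  refine ⟨fun v => (Mblk_mulVec_eq_self_iff Ψ X E 0 0 v).2 (by simp), ?_⟩
  rw [ker_Mblk_sub_id, LinearMap.finrank_ker_comp_of_surjective _ _
      (LinearMap.funLeft_surjective_of_injective ℝ ℝ _ hinj),
    LinearMap.finrank_ker_funLeft_of_injective ℝ hinj, ← Mred,
    ← Matrix.finrank_ker_mulVecLin_pos_iff]
  simp only [Fintype.card_sum, Fintype.card_fin]
  omega

/-- The kernel of `M(Ψ,X,E) − I` contains `{0}⊕{0}⊕ℝ^m`, and its dimension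
exceeds `m` if and only if the matrix `[[Ψ−I, ΨX],[XᵀJ₀, E + ½XᵀJ₀X]]` is
singular. -/
theorem stmt7 {n m : ℕ} (Ψ : Matrix (V n) (V n) ℝ) (X : Matrix (V n) (Fin m) ℝ)
    (E : Matrix (Fin m) (Fin m) ℝ) (hΨ : IsSymplectic Ψ) (hE : Eᵀ = E) :
    (∀ v : Fin m → ℝ,
      (Mblk Ψ X E).mulVec (Sum.elim (0 : V n → ℝ) (Sum.elim (0 : Fin m → ℝ) v)) =
        Sum.elim (0 : V n → ℝ) (Sum.elim (0 : Fin m → ℝ) v)) ∧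
    (m < Module.finrank ℝ
        (LinearMap.ker ((Mblk Ψ X E).mulVecLin - LinearMap.id)) ↔
      (Matrix.fromBlocks (Ψ - 1) (Ψ * X) (Xᵀ * J0 n)
        (E + (1 / 2 : ℝ) • (Xᵀ * J0 n * X))).det = 0) :=
  stmt7_general Ψ X E
end

section
/- Let M : [0,1] → Sp(2N) be a C¹ path, let E(t) ⊂ ker(M(t)−I) be a family of isotropic subspaces of the standard symplectic form ω₀ on R^{2N}, and decompose R^{2N} = E(t) ⊕ J₀E(t) ⊕ F(t) with F(t) the symplectic orthogonal of E(t) ⊕ J₀E(t). Fix t and β ≠ 0, and let Φ(t) ∈ Sp(2N) act as the identity on J₀E(t) ⊕ F(t) and send v₁ ∈ E(t) to v₁ + βJ₀v₁. Then for M̃(t) := M(t)Φ(t) one has ker(M̃(t) − I) = ker(M(t) − I) ∩ (J₀E(t) ⊕ F(t)). -/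
open Matrix

/-- The standard symplectic form `ω₀(u,v) = ⟨J₀u, v⟩` on `ℝ^{2N}`. -/
noncomputable def omega0 {N : ℕ} (u w : V N → ℝ) : ℝ :=
  (J0 N).mulVec u ⬝ᵥ w

/-!
Write `w = v₁ + v₂` with `v₁ ∈ E` and `v₂ ∈ J₀E ⊕ F`, so that `Φw = w + βJ₀v₁`. If `MΦw = w`, then
pairing with the fixed vector `v₁` and using that `M` preserves `ω₀` gives
`ω₀(v₁, w) = ω₀(v₁, w + βJ₀v₁)`, i.e. `β ω₀(v₁, J₀v₁) = β |J₀v₁|² = 0`, hence `v₁ = 0`.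
Then `Φ` fixes `w`, and `w` is fixed by `M`.
-/

lemma J0_transpose_mul_self (n : ℕ) : (J0 n)ᵀ * J0 n = 1 := by
  simp [J0, fromBlocks_transpose, fromBlocks_multiply, ← fromBlocks_one]

lemma omega0_J0_mulVec_self_eq_zero_iff {n : ℕ} (v : V n → ℝ) :
    omega0 v (J0 n *ᵥ v) = 0 ↔ v = 0 := by
  rw [omega0, dotProduct_self_eq_zero]
  refine ⟨fun h => ?_, fun h => by rw [h, mulVec_zero]⟩
  rw [← one_mulVec v, ← J0_transpose_mul_self, ← mulVec_mulVec, h, mulVec_zero]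

lemma IsSymplectic.omega0_mulVec {n : ℕ} {M : Matrix (V n) (V n) ℝ} (hM : IsSymplectic M)
    (u w : V n → ℝ) : omega0 (M *ᵥ u) (M *ᵥ w) = omega0 u w := by
  rw [omega0, omega0, mulVec_mulVec, dotProduct_mulVec, ← mulVec_transpose, mulVec_mulVec,
    ← mul_assoc, hM]

lemma IsSymplectic.omega0_mulVec_right_of_fixed {n : ℕ} {M : Matrix (V n) (V n) ℝ}
    (hM : IsSymplectic M) {v : V n → ℝ} (hv : M *ᵥ v = v) (w : V n → ℝ) :
    omega0 v (M *ᵥ w) = omega0 v w := by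
  conv_lhs => rw [← hv]
  exact hM.omega0_mulVec v w

lemma IsSymplectic.eq_zero_of_mulVec_add_smul_J0 {n : ℕ} {M : Matrix (V n) (V n) ℝ}
    (hM : IsSymplectic M) {β : ℝ} (hβ : β ≠ 0) {v w : V n → ℝ} (hv : M *ᵥ v = v)
    (hw : M *ᵥ (w + β • J0 n *ᵥ v) = w) : v = 0 := by
  have hpair := hM.omega0_mulVec_right_of_fixed hv (w + β • J0 n *ᵥ v)
  rw [hw] at hpair
  simp only [omega0, dotProduct_add, dotProduct_smul, smul_eq_mul] at hpair
  rw [← omega0_J0_mulVec_self_eq_zero_iff, omega0]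
  exact (mul_eq_zero.mp (by linarith)).resolve_left hβ

lemma mem_ker_mulVecLin_sub_id {ι R : Type*} [Fintype ι] [DecidableEq ι] [CommRing R]
    {A : Matrix ι ι R} {w : ι → R} :
    w ∈ LinearMap.ker (A.mulVecLin - LinearMap.id) ↔ A *ᵥ w = w := by
  simp [sub_eq_zero]

theorem stmt10_general {N : ℕ} (M Φ : Matrix (V N) (V N) ℝ) (β : ℝ) (hβ : β ≠ 0)
    (E F : Submodule ℝ (V N → ℝ))
    (hM : IsSymplectic M)
    (hEker : ∀ v ∈ E, M.mulVec v = v)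
    (hspan : E ⊔ (E.map (J0 N).mulVecLin ⊔ F) = ⊤)
    (hΦid : ∀ v ∈ E.map (J0 N).mulVecLin ⊔ F, Φ.mulVec v = v)
    (hΦE : ∀ v ∈ E, Φ.mulVec v = v + β • (J0 N).mulVec v) :
    LinearMap.ker ((M * Φ).mulVecLin - LinearMap.id) =
      LinearMap.ker (M.mulVecLin - LinearMap.id) ⊓
        (E.map (J0 N).mulVecLin ⊔ F) := by
  ext w
  simp only [Submodule.mem_inf, mem_ker_mulVecLin_sub_id, ← mulVec_mulVec]
  constructor
  · intro hw
    have hw_mem : w ∈ E ⊔ (E.map (J0 N).mulVecLin ⊔ F) := hspan ▸ Submodule.mem_top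
    obtain ⟨v₁, hv₁, v₂, hv₂, rfl⟩ := Submodule.mem_sup.mp hw_mem
    have hΦw : Φ *ᵥ (v₁ + v₂) = v₁ + v₂ + β • J0 N *ᵥ v₁ := by
      rw [mulVec_add, hΦE v₁ hv₁, hΦid v₂ hv₂, add_right_comm]
    obtain rfl : v₁ = 0 := hM.eq_zero_of_mulVec_add_smul_J0 hβ (hEker v₁ hv₁) (hΦw ▸ hw)
    rw [zero_add, hΦid v₂ hv₂] at hw
    rw [zero_add]
    exact ⟨hw, hv₂⟩
  · rintro ⟨hMw, hwG⟩
    rw [hΦid w hwG, hMw]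

/-- Let `E ⊂ ker(M−I)` be an isotropic subspace, `F` the symplectic orthogonal
of `E ⊕ J₀E`, so `ℝ^{2N} = E ⊕ J₀E ⊕ F`, and let `Φ ∈ Sp(2N)` act as the
identity on `J₀E ⊕ F` and send `v₁ ∈ E` to `v₁ + βJ₀v₁` with `β ≠ 0`. Then
`ker(MΦ − I) = ker(M − I) ∩ (J₀E ⊕ F)`. -/
theorem stmt10 {N : ℕ} (M Φ : Matrix (V N) (V N) ℝ) (β : ℝ) (hβ : β ≠ 0)
    (E F : Submodule ℝ (V N → ℝ))
    (hM : IsSymplectic M) (hΦ : IsSymplectic Φ)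
    (hEker : ∀ v ∈ E, M.mulVec v = v)
    (hiso : ∀ u ∈ E, ∀ v ∈ E, omega0 u v = 0)
    (hF : ∀ w, w ∈ F ↔ ∀ v ∈ E ⊔ E.map (J0 N).mulVecLin, omega0 w v = 0)
    (hspan : E ⊔ (E.map (J0 N).mulVecLin ⊔ F) = ⊤)
    (hdisj : E ⊓ (E.map (J0 N).mulVecLin ⊔ F) = ⊥)
    (hΦid : ∀ v ∈ E.map (J0 N).mulVecLin ⊔ F, Φ.mulVec v = v)
    (hΦE : ∀ v ∈ E, Φ.mulVec v = v + β • (J0 N).mulVec v) :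
    LinearMap.ker ((M * Φ).mulVecLin - LinearMap.id) =
      LinearMap.ker (M.mulVecLin - LinearMap.id) ⊓
        (E.map (J0 N).mulVecLin ⊔ F) :=
  stmt10_general M Φ β hβ E F hM hEker hspan hΦid hΦE
end

section
/- Let M ∈ Sp(2N), let E ⊂ ker(M − I) be a symplectic subspace of (R^{2N}, ω₀), let F be the symplectic orthogonal of E, and let J be a complex structure on E compatible with ω₀|_E. For 0 < ε < π, let Φ ∈ Sp(2N) act as exp(Jε) on E and as the identity on F. Then ker(MΦ − I) = ker(M − I) ∩ F. -/
open Matrix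

/-! Write a fixed vector of `MΦ` as `v = e + f` with `e ∈ E`, `f ∈ F`. Since `M` fixes `E`,
`MΦv = v` becomes `Mf - f = (1 - cos ε) e - sin ε · J e`. Pairing with `e` kills the left side,
because `ω₀(e, Mf) = ω₀(Me, Mf) = ω₀(e, f)`, and kills `ω₀(e, e)`; what remains is
`sin ε · ω₀(e, J e) = 0`, which forces `e = 0` by compatibility of `J`. -/

lemma J0_transpose (n : ℕ) : (J0 n)ᵀ = -J0 n := by
  simp [J0, fromBlocks_transpose, fromBlocks_neg]

lemma omega0_self {N : ℕ} (u : V N → ℝ) : omega0 u u = 0 := by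
  have h : omega0 u u = -omega0 u u := by
    conv_lhs => rw [omega0, dotProduct_comm, dotProduct_mulVec, ← mulVec_transpose,
      J0_transpose, neg_mulVec, neg_dotProduct]
    rfl
  linarith

lemma omega0_sub_right {N : ℕ} (u x y : V N → ℝ) :
    omega0 u (x - y) = omega0 u x - omega0 u y :=
  dotProduct_sub _ _ _

lemma omega0_add_right {N : ℕ} (u x y : V N → ℝ) :
    omega0 u (x + y) = omega0 u x + omega0 u y :=
  dotProduct_add _ _ _

lemma omega0_smul_right {N : ℕ} (u : V N → ℝ) (a : ℝ) (x : V N → ℝ) :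
    omega0 u (a • x) = a * omega0 u x :=
  dotProduct_smul _ _ _

lemma IsSymplectic.omega0_mulVec_mulVec {N : ℕ} {M : Matrix (V N) (V N) ℝ}
    (hM : IsSymplectic M) (u w : V N → ℝ) : omega0 (M *ᵥ u) (M *ᵥ w) = omega0 u w := by
  rw [omega0, mulVec_mulVec, dotProduct_mulVec, ← mulVec_transpose, mulVec_mulVec,
    ← Matrix.mul_assoc, hM, omega0]

lemma IsSymplectic.omega0_mulVec_sub_self {N : ℕ} {M : Matrix (V N) (V N) ℝ}
    (hM : IsSymplectic M) {e : V N → ℝ} (he : M *ᵥ e = e) (f : V N → ℝ) :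
    omega0 e (M *ᵥ f - f) = 0 := by
  rw [omega0_sub_right, ← hM.omega0_mulVec_mulVec e f, he, sub_self]

lemma IsSymplectic.omega0_eq_zero_of_mulVec_sub_self_eq {N : ℕ} {M : Matrix (V N) (V N) ℝ}
    (hM : IsSymplectic M) {e f w : V N → ℝ} {a b : ℝ} (he : M *ᵥ e = e) (hb : b ≠ 0)
    (h : M *ᵥ f - f = a • e + b • w) : omega0 e w = 0 := by
  have h0 := hM.omega0_mulVec_sub_self he f
  rw [h, omega0_add_right, omega0_smul_right, omega0_smul_right, omega0_self, mul_zero,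
    zero_add] at h0
  exact (mul_eq_zero.mp h0).resolve_left hb

theorem stmt11_general {N : ℕ} (M Φ : Matrix (V N) (V N) ℝ) (ε : ℝ)
    (hε : 0 < ε) (hε' : ε < Real.pi)
    (E F : Submodule ℝ (V N → ℝ)) (J : (V N → ℝ) →ₗ[ℝ] (V N → ℝ))
    (hM : IsSymplectic M)
    (hEker : ∀ v ∈ E, M.mulVec v = v)
    (hspan : E ⊔ F = ⊤)
    (hJE : ∀ v ∈ E, J v ∈ E)
    (hJpos : ∀ v ∈ E, v ≠ 0 → 0 < omega0 v (J v))
    (hΦE : ∀ v ∈ E, Φ.mulVec v = Real.cos ε • v + Real.sin ε • J v)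
    (hΦF : ∀ v ∈ F, Φ.mulVec v = v) :
    LinearMap.ker ((M * Φ).mulVecLin - LinearMap.id) =
      LinearMap.ker (M.mulVecLin - LinearMap.id) ⊓ F := by
  ext v
  simp only [LinearMap.mem_ker, Submodule.mem_inf, LinearMap.sub_apply, LinearMap.id_apply,
    mulVecLin_apply, sub_eq_zero, ← mulVec_mulVec]
  refine ⟨fun hv => ?_, fun ⟨hMv, hvF⟩ => by rw [hΦF v hvF, hMv]⟩
  obtain ⟨e, he, f, hf, rfl⟩ := Submodule.mem_sup.mp (hspan ▸ Submodule.mem_top : v ∈ E ⊔ F)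
  have hMe := hEker e he
  have hMf : M *ᵥ f - f = (1 - Real.cos ε) • e + (-Real.sin ε) • J e := by
    rw [mulVec_add, hΦE e he, hΦF f hf, mulVec_add, mulVec_add, mulVec_smul, mulVec_smul,
      hMe, hEker _ (hJE e he)] at hv
    linear_combination (norm := module) hv
  have hsin : -Real.sin ε ≠ 0 := neg_ne_zero.mpr (Real.sin_pos_of_pos_of_lt_pi hε hε').ne'
  have he0 : e = 0 := by
    by_contra hne
    exact (hJpos e he hne).ne' (hM.omega0_eq_zero_of_mulVec_sub_self_eq hMe hsin hMf)
  subst he0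
  simp only [map_zero, smul_zero, add_zero, sub_eq_zero, zero_add] at hMf ⊢
  exact ⟨hMf, hf⟩

/-- Let `E ⊂ ker(M−I)` be a symplectic subspace, `F` its symplectic orthogonal
(so `ℝ^{2N} = E ⊕ F`), and `J` a complex structure on `E` compatible with
`ω₀|_E`. For `0 < ε < π`, let `Φ ∈ Sp(2N)` act as `exp(Jε)` on `E` (i.e. as
`cos ε + (sin ε) J`, since `J² = −Id` on `E`) and as the identity on `F`.
Then `ker(MΦ − I) = ker(M − I) ∩ F`. -/
theorem stmt11 {N : ℕ} (M Φ : Matrix (V N) (V N) ℝ) (ε : ℝ)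
    (hε : 0 < ε) (hε' : ε < Real.pi)
    (E F : Submodule ℝ (V N → ℝ)) (J : (V N → ℝ) →ₗ[ℝ] (V N → ℝ))
    (hM : IsSymplectic M) (hΦ : IsSymplectic Φ)
    (hEker : ∀ v ∈ E, M.mulVec v = v)
    (hEsympl : ∀ v ∈ E, v ≠ 0 → ∃ w ∈ E, omega0 v w ≠ 0)
    (hF : ∀ w, w ∈ F ↔ ∀ v ∈ E, omega0 w v = 0)
    (hspan : E ⊔ F = ⊤) (hdisj : E ⊓ F = ⊥)
    (hJE : ∀ v ∈ E, J v ∈ E)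
    (hJ2 : ∀ v ∈ E, J (J v) = -v)
    (hJcompat : ∀ u ∈ E, ∀ v ∈ E, omega0 (J u) (J v) = omega0 u v)
    (hJpos : ∀ v ∈ E, v ≠ 0 → 0 < omega0 v (J v))
    (hΦE : ∀ v ∈ E, Φ.mulVec v = Real.cos ε • v + Real.sin ε • J v)
    (hΦF : ∀ v ∈ F, Φ.mulVec v = v) :
    LinearMap.ker ((M * Φ).mulVecLin - LinearMap.id) =
      LinearMap.ker (M.mulVecLin - LinearMap.id) ⊓ F :=
  stmt11_general M Φ ε hε hε' E F J hM hEker hspan hJE hJpos hΦE hΦF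
end

section
/- Let Ψ ∈ Sp(2n), X ∈ Mat_{2n,m}(R), E ∈ Mat_m(R) symmetric, and suppose the path endpoint matrix M = M(Ψ,X,E) ∈ 𝒮_{n,m} satisfies dim ker(M − I) = m (i.e. M ∈ 𝒮⁰_{n,m}). For θ ∈ [0,ε] define M'(θ) := [[Ψ, ΨX, θΨX],[0, I, θI],[XᵀJ₀, E + (1/2)XᵀJ₀X, I + θ(E + (1/2)XᵀJ₀X)]]. Then det(M'(ε) − I) = ε^m (−1)^m det([[Ψ − I, ΨX],[XᵀJ₀, E + (1/2)XᵀJ₀X]]). -/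
open Matrix

/-!
In `M'(ε) − I = [[Ψ − I, ΨX, εΨX], [0, 0, εI], [XᵀJ₀, C, εC]]` the last block column is `ε` times
the middle one, except in the middle block row. Subtracting `ε` times the middle block column
leaves `[[Ψ − I, ΨX, 0], [0, 0, εI], [XᵀJ₀, C, 0]]`; swapping its last two block rows costs
`(−1)^m` and yields a block diagonal matrix with blocks `[[Ψ − I, ΨX], [XᵀJ₀, C]]` and `εI`.
-/

variable {R ι κ : Type*} [CommRing R]

/-- `M'(θ)` with `B = ΨX`, `D = XᵀJ₀` and `C = E + ½XᵀJ₀X`. -/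
def pathExtension [DecidableEq κ] (Ψ : Matrix ι ι R) (B : Matrix ι κ R) (D : Matrix κ ι R)
    (C : Matrix κ κ R) (θ : R) : Matrix (ι ⊕ (κ ⊕ κ)) (ι ⊕ (κ ⊕ κ)) R :=
  fromBlocks Ψ (fromCols B (θ • B)) (fromRows 0 D) (fromBlocks 1 (θ • 1) C (1 + θ • C))

theorem pathExtension_sub_one [DecidableEq ι] [DecidableEq κ] (Ψ : Matrix ι ι R)
    (B : Matrix ι κ R) (D : Matrix κ ι R) (C : Matrix κ κ R) (c : R) :
    pathExtension Ψ B D C c - 1 =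
      fromBlocks (Ψ - 1) (fromCols B (c • B)) (fromRows 0 D) (fromBlocks 0 (c • 1) C (c • C)) := by
  rw [pathExtension, ← fromBlocks_one, ← fromBlocks_one (m := κ), sub_eq_add_neg, fromBlocks_neg,
    fromBlocks_neg, fromBlocks_add, fromBlocks_add]
  simp [sub_eq_add_neg]

namespace Matrix

variable [Fintype κ] [DecidableEq κ]

theorem det_fromBlocks_zero_one_one_zero :
    (fromBlocks 0 1 1 0 : Matrix (κ ⊕ κ) (κ ⊕ κ) R).det = (-1) ^ Fintype.card κ := by
  have h : (fromBlocks 0 1 1 0 : Matrix (κ ⊕ κ) (κ ⊕ κ) R) =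
      fromBlocks (-1) 1 0 1 * fromBlocks 1 0 1 1 * fromBlocks 1 (-1) 0 1 := by
    simp [fromBlocks_multiply]
  simp [h, det_neg]

variable [Fintype ι] [DecidableEq ι]

theorem det_fromBlocks_fromCols_fromRows (A : Matrix ι ι R) (B : Matrix ι κ R)
    (D : Matrix κ ι R) (C S : Matrix κ κ R) :
    (fromBlocks A (fromCols B 0) (fromRows D 0) (fromBlocks C 0 0 S)).det =
      (fromBlocks A B D C).det * S.det := by
  have h : fromBlocks A (fromCols B 0) (fromRows D 0) (fromBlocks C 0 0 S) =
      (fromBlocks (fromBlocks A B D C) 0 0 S).submatrix (Equiv.sumAssoc ι κ κ).symm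
        (Equiv.sumAssoc ι κ κ).symm := by
    ext (i | i | i) (j | j | j) <;> rfl
  rw [h, det_submatrix_equiv_self, det_fromBlocks_zero₂₁]

end Matrix

section

variable [Fintype ι] [DecidableEq ι] [Fintype κ] [DecidableEq κ]

theorem fromBlocks_fromCols_smul_eq_mul (A : Matrix ι ι R) (B : Matrix ι κ R)
    (D : Matrix κ ι R) (C : Matrix κ κ R) (c : R) :
    fromBlocks A (fromCols B (c • B)) (fromRows 0 D)
        (fromBlocks 0 (c • (1 : Matrix κ κ R)) C (c • C)) =
      fromBlocks 1 0 0 (fromBlocks 0 1 1 0) *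
        fromBlocks A (fromCols B 0) (fromRows D 0) (fromBlocks C 0 0 (c • 1)) *
        fromBlocks 1 0 0 (fromBlocks 1 (c • 1) 0 1) := by
  simp [fromBlocks_multiply, fromBlocks_mul_fromRows, fromCols_mul_fromBlocks]

theorem det_pathExtension_sub_one (Ψ : Matrix ι ι R) (B : Matrix ι κ R) (D : Matrix κ ι R)
    (C : Matrix κ κ R) (c : R) :
    (pathExtension Ψ B D C c - 1).det =
      c ^ Fintype.card κ * (-1) ^ Fintype.card κ * (fromBlocks (Ψ - 1) B D C).det := by
  rw [pathExtension_sub_one, fromBlocks_fromCols_smul_eq_mul, det_mul, det_mul,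
    det_fromBlocks_fromCols_fromRows, det_fromBlocks_zero₂₁, det_fromBlocks_zero₂₁,
    det_fromBlocks_zero₂₁, det_fromBlocks_zero_one_one_zero]
  simp only [det_one, one_mul, mul_one, det_smul_of_tower, smul_eq_mul]
  ring

end

theorem stmt19_general {n m : ℕ} (Ψ : Matrix (V n) (V n) ℝ) (X : Matrix (V n) (Fin m) ℝ)
    (E : Matrix (Fin m) (Fin m) ℝ)
    (ε : ℝ) :
    (let Cm : Matrix (Fin m) (Fin m) ℝ := E + (1 / 2 : ℝ) • (Xᵀ * J0 n * X);
    let M' : Matrix (V n ⊕ V m) (V n ⊕ V m) ℝ :=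
      Matrix.fromBlocks Ψ (Matrix.fromCols (Ψ * X) (ε • (Ψ * X)))
        (Matrix.fromRows 0 (Xᵀ * J0 n))
        (Matrix.fromBlocks 1 (ε • (1 : Matrix (Fin m) (Fin m) ℝ)) Cm (1 + ε • Cm));
    (M' - 1).det =
      ε ^ m * (-1 : ℝ) ^ m *
        (Matrix.fromBlocks (Ψ - 1) (Ψ * X) (Xᵀ * J0 n) Cm).det) := by
  intro Cm M'
  have h := det_pathExtension_sub_one Ψ (Ψ * X) (Xᵀ * J0 n) Cm ε
  rwa [Fintype.card_fin] at h

/-- If `M = M(Ψ,X,E)` satisfies `dim ker(M − I) = m`, then for the extension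
path `M'(θ)` one has
`det(M'(ε) − I) = ε^m (−1)^m det [[Ψ − I, ΨX],[XᵀJ₀, E + ½XᵀJ₀X]]`. -/
theorem stmt19 {n m : ℕ} (Ψ : Matrix (V n) (V n) ℝ) (X : Matrix (V n) (Fin m) ℝ)
    (E : Matrix (Fin m) (Fin m) ℝ) (hΨ : IsSymplectic Ψ) (hE : Eᵀ = E)
    (hker : Module.finrank ℝ
      (LinearMap.ker ((Mblk Ψ X E).mulVecLin - LinearMap.id)) = m)
    (ε : ℝ) (hε : 0 ≤ ε) :
    (let Cm : Matrix (Fin m) (Fin m) ℝ := E + (1 / 2 : ℝ) • (Xᵀ * J0 n * X);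
    let M' : Matrix (V n ⊕ V m) (V n ⊕ V m) ℝ :=
      Matrix.fromBlocks Ψ (Matrix.fromCols (Ψ * X) (ε • (Ψ * X)))
        (Matrix.fromRows 0 (Xᵀ * J0 n))
        (Matrix.fromBlocks 1 (ε • (1 : Matrix (Fin m) (Fin m) ℝ)) Cm (1 + ε • Cm));
    (M' - 1).det =
      ε ^ m * (-1 : ℝ) ^ m *
        (Matrix.fromBlocks (Ψ - 1) (Ψ * X) (Xᵀ * J0 n) Cm).det) :=
  stmt19_general Ψ X E ε
end
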